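/- arXiv:1404.1835 — 4 statements merged into one kernel-verified Lean document; each statement's English description precedes it below -/
import Mathlib

section
/- If a function f: ℝⁿ → ℝⁿ satisfies the one-sided Lipschitz (QUAD) condition (x-y)ᵀ(f(x)-f(y)) ≤ (x-y)ᵀW(x-y) with W a diagonal matrix whose maximum eigenvalue w_max is negative, and g: ℝⁿ → ℝⁿ satisfies ‖g(x)‖ ≤ M for all x and ‖f(0)‖ ≤ h₀, then along any solution of ẋ = f(x) + g(x) the function U(x) = ½‖x‖² satisfies dU/dt ≤ w_max‖x‖² + ‖x‖(M + h₀). Consequently U is strictly decreasing whenever ‖x‖ > (M + h₀)/(-w_max). -/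
open Matrix Finset
open RealInnerProductSpace

/-!
Testing the one-sided Lipschitz condition against the origin gives
`⟪x, f x - f 0⟫ ≤ w_max ‖x‖²`, while Cauchy–Schwarz bounds the remaining terms `⟪x, f 0⟫` and
`⟪x, g x⟫` by `‖x‖ h₀` and `‖x‖ M`. The right-hand side `‖x‖ (w_max ‖x‖ + M + h₀)` is negative
beyond the radius `(M + h₀) / (-w_max)`.
-/

theorem EuclideanSpace.sum_mul_sq_le_mul_norm_sq {ι : Type*} [Fintype ι] {w : ι → ℝ} {c : ℝ}
    (hw : ∀ i, w i ≤ c) (v : EuclideanSpace ℝ ι) : ∑ i, w i * v i ^ 2 ≤ c * ‖v‖ ^ 2 := by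
  rw [EuclideanSpace.real_norm_sq_eq, Finset.mul_sum]
  exact Finset.sum_le_sum fun i _ => mul_le_mul_of_nonneg_right (hw i) (sq_nonneg _)

theorem inner_add_le_of_oneSidedLipschitz {E : Type*} [NormedAddCommGroup E]
    [InnerProductSpace ℝ E] {f g : E → E} {c M h₀ : ℝ}
    (hf : ∀ x y, ⟪x - y, f x - f y⟫ ≤ c * ‖x - y‖ ^ 2) (hf0 : ‖f 0‖ ≤ h₀)
    (hg : ∀ x, ‖g x‖ ≤ M) (z : E) :
    ⟪z, f z + g z⟫ ≤ c * ‖z‖ ^ 2 + ‖z‖ * (M + h₀) := by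
  have hsplit : ⟪z, f z + g z⟫ = ⟪z - 0, f z - f 0⟫ + ⟪z, f 0⟫ + ⟪z, g z⟫ := by
    simp only [sub_zero, inner_sub_right, inner_add_right]
    ring
  have hlip : ⟪z - 0, f z - f 0⟫ ≤ c * ‖z‖ ^ 2 := by simpa using hf z 0
  have hf0' : ⟪z, f 0⟫ ≤ ‖z‖ * h₀ :=
    (real_inner_le_norm _ _).trans (mul_le_mul_of_nonneg_left hf0 (norm_nonneg _))
  have hg' : ⟪z, g z⟫ ≤ ‖z‖ * M :=
    (real_inner_le_norm _ _).trans (mul_le_mul_of_nonneg_left (hg z) (norm_nonneg _))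
  linarith

theorem mul_sq_add_mul_neg_of_div_lt {c K r : ℝ} (hc : c < 0) (hK : 0 ≤ K) (hr : K / -c < r) :
    c * r ^ 2 + r * K < 0 := by
  have hr0 : 0 < r := (div_nonneg hK (by linarith)).trans_lt hr
  have hKr : K < r * -c := (div_lt_iff₀ (by linarith)).mp hr
  nlinarith

theorem stmt0_general (n : ℕ) (f g : EuclideanSpace ℝ (Fin n) → EuclideanSpace ℝ (Fin n))
    (w : Fin n → ℝ) (wmax : ℝ) (hwmax : IsGreatest (Set.range w) wmax) (hwneg : wmax < 0)
    (M h₀ : ℝ)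
    (hg : ∀ x, ‖g x‖ ≤ M) (hf0 : ‖f 0‖ ≤ h₀)
    (hQUAD : ∀ x y : EuclideanSpace ℝ (Fin n),
      ⟪x - y, f x - f y⟫ ≤ ∑ i, w i * (x i - y i) ^ 2)
    (x : ℝ → EuclideanSpace ℝ (Fin n))
    (hx : ∀ t, HasDerivAt x (f (x t) + g (x t)) t) :
    (∀ t : ℝ,
      HasDerivAt (fun s => (1 / 2 : ℝ) * ‖x s‖ ^ 2) (⟪x t, f (x t) + g (x t)⟫) t ∧
      ⟪x t, f (x t) + g (x t)⟫ ≤ wmax * ‖x t‖ ^ 2 + ‖x t‖ * (M + h₀)) ∧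
    (∀ t : ℝ, ‖x t‖ > (M + h₀) / (-wmax) → ⟪x t, f (x t) + g (x t)⟫ < 0) := by
  have hlip : ∀ y z, ⟪y - z, f y - f z⟫ ≤ wmax * ‖y - z‖ ^ 2 := fun y z =>
    (hQUAD y z).trans <| by
      simpa using EuclideanSpace.sum_mul_sq_le_mul_norm_sq (fun i => hwmax.2 ⟨i, rfl⟩) (y - z)
  have hbound := inner_add_le_of_oneSidedLipschitz hlip hf0 hg
  refine ⟨fun t => ⟨?_, hbound (x t)⟩, fun t ht => ?_⟩
  · simpa using ((hx t).norm_sq).const_mul (1 / 2 : ℝ)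
  · have hMh₀ : 0 ≤ M + h₀ :=
      add_nonneg ((norm_nonneg _).trans (hg 0)) ((norm_nonneg _).trans hf0)
    exact (hbound (x t)).trans_lt (mul_sq_add_mul_neg_of_div_lt hwneg hMh₀ ht)

/-- If `f` satisfies the QUAD (one-sided Lipschitz) condition with a diagonal
matrix `W` (diagonal entries `w`) whose maximum eigenvalue `wmax` is negative, `g` is bounded
by `M` and `‖f 0‖ ≤ h₀`, then along any solution of `ẋ = f x + g x`, the function
`U(x) = ½‖x‖²` has derivative `⟪x, f x + g x⟫` which is bounded by
`wmax‖x‖² + ‖x‖(M + h₀)`; in particular the derivative is negative (U strictly decreasing)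
whenever `‖x‖ > (M + h₀)/(-wmax)`. -/
theorem stmt0 (n : ℕ) (f g : EuclideanSpace ℝ (Fin n) → EuclideanSpace ℝ (Fin n))
    (w : Fin n → ℝ) (wmax : ℝ) (hwmax : IsGreatest (Set.range w) wmax) (hwneg : wmax < 0)
    (M h₀ : ℝ) (hM : 0 ≤ M) (hh₀ : 0 ≤ h₀)
    (hg : ∀ x, ‖g x‖ ≤ M) (hf0 : ‖f 0‖ ≤ h₀)
    (hQUAD : ∀ x y : EuclideanSpace ℝ (Fin n),
      ⟪x - y, f x - f y⟫ ≤ ∑ i, w i * (x i - y i) ^ 2)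
    (x : ℝ → EuclideanSpace ℝ (Fin n))
    (hx : ∀ t, HasDerivAt x (f (x t) + g (x t)) t) :
    (∀ t : ℝ,
      HasDerivAt (fun s => (1 / 2 : ℝ) * ‖x s‖ ^ 2) (⟪x t, f (x t) + g (x t)⟫) t ∧
      ⟪x t, f (x t) + g (x t)⟫ ≤ wmax * ‖x t‖ ^ 2 + ‖x t‖ * (M + h₀)) ∧
    (∀ t : ℝ, ‖x t‖ > (M + h₀) / (-wmax) → ⟪x t, f (x t) + g (x t)⟫ < 0) :=
  stmt0_general n f g w wmax hwmax hwneg M h₀ hg hf0 hQUAD x hx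
end

section
/- Consider N coupled systems ẋᵢ = f(xᵢ) + gᵢ(xᵢ) − c Σⱼ a_ij Γ(xᵢ − xⱼ), where f is QUAD(P,W) with P positive definite diagonal, W diagonal, Γ = diag(γ₁,…,γₙ) with γᵢ > 0 for i ≤ l and γᵢ = 0 for i > l, each ‖gᵢ‖ ≤ M, the first l̄ ≤ l diagonal entries of W may be nonnegative but w_i < 0 for i > l, and the graph with weights a_ij is connected with Laplacian L. Let eᵢ = xᵢ − (1/N)Σⱼ xⱼ and e the stack vector. Then along solutions, V(e) = ½ eᵀ(I_N ⊗ P)e satisfies V̇ ≤ −m(c,P,W)‖e‖₂² + √N ‖P‖₂ M ‖e‖₂, where m(c,P,W) = −max{λ_max(W_l) − c λ₂(L ⊗ P_l Γ_l), λ_max(W_{n−l})}, with W_l, P_l, Γ_l the upper-left l×l blocks and W_{n−l} the lower-right block. -/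
open Matrix Finset Kronecker
open scoped BigOperators RealInnerProductSpace

/-!
The errors `eᵢ = xᵢ - x̄` sum to zero, so every term of `V̇ = Σᵢ eᵢᵀ P ėᵢ` that does not depend
on `i` drops out: `ėᵢ` may be replaced by `ẋᵢ`, and `f (xᵢ)` by `f (xᵢ) - f (x̄)`. The QUAD
condition then bounds the drift by `Σᵢ eᵢᵀ W eᵢ`, Cauchy–Schwarz bounds the perturbation by
`√N ‖P‖ M ‖e‖`, and the coupling contributes `-c zᵀ (L ⊗ P_l Γ_l) z`, where `z` collects the
first `l` coordinates of the errors. As the graph is connected, the kernel of `L ⊗ P_l Γ_l`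
consists of vectors that are constant along the nodes, to which `z` is orthogonal; so by the
spectral theorem `zᵀ (L ⊗ P_l Γ_l) z ≥ λ₂ ‖z‖²`. Splitting `‖e‖²` into coupled and uncoupled
coordinates yields the rate `m`.
-/

section Average

variable {ι κ : Type*} [Fintype ι]

theorem sum_sub_expect_eq_zero {M : Type*} [AddCommGroup M] [Module ℚ≥0 M] (x : ι → M) :
    ∑ i, (x i - 𝔼 j, x j) = 0 := by
  rw [sum_sub_distrib, sum_const, card_univ, Fintype.card_smul_expect, sub_self]

theorem sum_sub_expect_apply_eq_zero (x : ι → κ → ℝ) (k : κ) :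
    ∑ i, (x i k - (𝔼 j, x j) k) = 0 := by
  simpa only [Finset.sum_apply, Pi.sub_apply, Pi.zero_apply] using
    congrFun (sum_sub_expect_eq_zero x) k

theorem sum_sum_mul_sub_expect_eq_zero [Fintype κ] (x : ι → κ → ℝ) (u : κ → ℝ) :
    ∑ i, ∑ k, u k * (x i k - (𝔼 j, x j) k) = 0 := by
  rw [sum_comm]
  refine sum_eq_zero fun k _ => ?_
  rw [← mul_sum, sum_sub_expect_apply_eq_zero, mul_zero]

theorem hasDerivAt_half_sum_mul_sq_sub_expect [Fintype κ] {x : ℝ → ι → κ → ℝ}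
    {x' : ι → κ → ℝ} {t : ℝ} (hx : ∀ i, HasDerivAt (fun s => x s i) (x' i) t) (p : κ → ℝ) :
    HasDerivAt (fun s => (1 / 2 : ℝ) * ∑ i, ∑ k, p k * (x s i k - (𝔼 j, x s j) k) ^ 2)
      (∑ i, ∑ k, p k * (x t i k - (𝔼 j, x t j) k) * x' i k) t := by
  have hcoord : ∀ i k, HasDerivAt (fun s => x s i k) (x' i k) t :=
    fun i k => hasDerivAt_pi.mp (hx i) k
  have hexpect : ∀ k, HasDerivAt (fun s => (𝔼 j, x s j) k) ((𝔼 j, x' j) k) t := fun k => by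
    simp only [expect_apply, Fintype.expect_eq_sum_div_card]
    exact (HasDerivAt.fun_sum fun j _ => hcoord j k).div_const _
  have hV := (HasDerivAt.fun_sum (u := univ) fun i _ => HasDerivAt.fun_sum (u := univ) fun k _ =>
    (((hcoord i k).sub (hexpect k)).pow 2).const_mul (p k)).const_mul (1 / 2 : ℝ)
  refine hV.congr_deriv ?_
  -- the derivative of the average is the same for every `i`, so its contribution vanishes
  have hmean := sum_sum_mul_sub_expect_eq_zero (x t) fun k => p k * (𝔼 j, x' j) k
  rw [mul_sum, ← sub_zero (∑ i, ∑ k, _), ← hmean, ← sum_sub_distrib]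
  refine sum_congr rfl fun i _ => ?_
  rw [mul_sum, ← sum_sub_distrib]
  refine sum_congr rfl fun k _ => ?_
  simp only [Pi.sub_apply, Nat.cast_ofNat]
  ring

end Average

theorem LinearMap.IsSymmetric.mul_norm_sq_le_inner_apply_self
    {E : Type*} [NormedAddCommGroup E] [InnerProductSpace ℝ E] [FiniteDimensional ℝ E]
    {T : E →ₗ[ℝ] E} (hT : T.IsSymmetric) {lam : ℝ}
    (hlam : ∀ μ, μ ≠ 0 → Module.End.HasEigenvalue T μ → lam ≤ μ)
    {z : E} (hz : ∀ v ∈ LinearMap.ker T, ⟪v, z⟫ = 0) :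
    lam * ‖z‖ ^ 2 ≤ ⟪z, T z⟫ := by
  set b := hT.eigenvectorBasis rfl
  set μ := hT.eigenvalues rfl
  have hquad : ⟪z, T z⟫ = ∑ i, μ i * ⟪b i, z⟫ ^ 2 := by
    rw [← b.sum_inner_mul_inner z (T z)]
    refine sum_congr rfl fun i _ => ?_
    rw [← hT, hT.apply_eigenvectorBasis, real_inner_smul_left, real_inner_comm,
      RCLike.ofReal_real_eq_id, id_eq]
    ring
  rw [← b.sum_sq_inner_right, hquad, mul_sum]
  refine sum_le_sum fun i _ => ?_
  by_cases hμ : μ i = 0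
  · have hker : b i ∈ LinearMap.ker T := by
      rw [LinearMap.mem_ker, hT.apply_eigenvectorBasis]
      simp [μ] at hμ
      simp [hμ]
    simp [hz _ hker]
  · exact mul_le_mul_of_nonneg_right (hlam _ hμ (hT.hasEigenvalue_eigenvalues rfl i))
      (sq_nonneg _)

theorem Matrix.IsHermitian.mul_dotProduct_self_le {ι : Type*} [Fintype ι] [DecidableEq ι]
    {B : Matrix ι ι ℝ} (hB : B.IsHermitian) {lam : ℝ}
    (hlam : ∀ μ, μ ≠ 0 → (∃ v, v ≠ 0 ∧ B *ᵥ v = μ • v) → lam ≤ μ)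
    {z : ι → ℝ} (hz : ∀ v, B *ᵥ v = 0 → v ⬝ᵥ z = 0) :
    lam * (z ⬝ᵥ z) ≤ z ⬝ᵥ (B *ᵥ z) := by
  have hinner : ∀ u v : ι → ℝ, ⟪WithLp.toLp 2 u, WithLp.toLp 2 v⟫ = u ⬝ᵥ v := fun u v => by
    simp [EuclideanSpace.inner_eq_star_dotProduct, dotProduct_comm]
  have key := (isSymmetric_toEuclideanLin_iff.mpr hB).mul_norm_sq_le_inner_apply_self
    (lam := lam) (z := WithLp.toLp 2 z) ?_ ?_
  · rwa [← real_inner_self_eq_norm_sq, hinner, toLpLin_toLp, hinner] at key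
  · intro μ hμ hev
    obtain ⟨v, hv, hv0⟩ := hev.exists_hasEigenvector
    refine hlam μ hμ ⟨v.ofLp, by simpa using hv0, ?_⟩
    simpa using congrArg WithLp.ofLp (Module.End.mem_eigenspace_iff.mp hv)
  · intro v hv
    simpa [hinner] using hz v.ofLp (congrArg WithLp.ofLp hv)

section WeightedLaplacian

variable {ι : Type*} [Fintype ι] [DecidableEq ι] (a : ι → ι → ℝ)

def weightedLaplacian : Matrix ι ι ℝ :=
  Matrix.of fun i j => if i = j then ∑ k ∈ univ.erase i, a i k else -a i j

variable {a}

theorem weightedLaplacian_mulVec_apply (v : ι → ℝ) (i : ι) :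
    (weightedLaplacian a *ᵥ v) i = ∑ j, a i j * (v i - v j) := by
  rw [mulVec, dotProduct, ← add_sum_erase _ _ (mem_univ i),
    ← add_sum_erase _ _ (mem_univ i), sub_self, mul_zero, zero_add]
  simp only [weightedLaplacian, of_apply, if_true, sum_mul, ← sum_add_distrib]
  refine sum_congr rfl fun j hj => ?_
  rw [if_neg (ne_of_mem_erase hj).symm]
  ring

theorem isHermitian_weightedLaplacian (hsym : ∀ i j, a i j = a j i) :
    (weightedLaplacian a).IsHermitian := by
  ext i j
  by_cases h : i = j
  · simp [weightedLaplacian, h]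
  · simp [weightedLaplacian, h, Ne.symm h, hsym i j]

theorem dotProduct_weightedLaplacian_mulVec (hsym : ∀ i j, a i j = a j i) (v : ι → ℝ) :
    v ⬝ᵥ (weightedLaplacian a *ᵥ v) = (1 / 2) * ∑ i, ∑ j, a i j * (v i - v j) ^ 2 := by
  have hswap : ∑ i, ∑ j, a i j * (v i * (v i - v j)) =
      ∑ i, ∑ j, a i j * (v j * (v j - v i)) := by
    rw [sum_comm]
    simp only [hsym]
  have hexpand : ∑ i, ∑ j, a i j * (v i - v j) ^ 2 =
      ∑ i, ∑ j, a i j * (v i * (v i - v j)) + ∑ i, ∑ j, a i j * (v j * (v j - v i)) := by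
    simp only [← sum_add_distrib]
    exact sum_congr rfl fun i _ => sum_congr rfl fun j _ => by ring
  rw [hexpand, ← hswap, ← two_mul, ← mul_assoc, one_div, inv_mul_cancel₀ two_ne_zero, one_mul]
  refine sum_congr rfl fun i _ => ?_
  rw [weightedLaplacian_mulVec_apply, mul_sum]
  exact sum_congr rfl fun j _ => by ring

theorem eq_of_weightedLaplacian_mulVec_eq_zero (hsym : ∀ i j, a i j = a j i)
    (hnonneg : ∀ i j, 0 ≤ a i j) {G : SimpleGraph ι} (hG : G.Connected)
    (hadj : ∀ i j, G.Adj i j → 0 < a i j) {v : ι → ℝ} (hv : weightedLaplacian a *ᵥ v = 0)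
    (i j : ι) : v i = v j := by
  have hterm_nonneg : ∀ i j, 0 ≤ a i j * (v i - v j) ^ 2 :=
    fun i j => mul_nonneg (hnonneg i j) (sq_nonneg _)
  have hterms : ∀ i j, a i j * (v i - v j) ^ 2 = 0 := by
    have hsum := dotProduct_weightedLaplacian_mulVec hsym v
    rw [hv, dotProduct_zero, eq_comm, mul_eq_zero, or_iff_right (by norm_num),
      sum_eq_zero_iff_of_nonneg fun i _ => sum_nonneg fun j _ => hterm_nonneg i j] at hsum
    exact fun i j => (sum_eq_zero_iff_of_nonneg fun j _ => hterm_nonneg i j).mp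
      (hsum i (mem_univ i)) j (mem_univ j)
  obtain ⟨w⟩ := hG i j
  induction w with
  | nil => rfl
  | @cons u w _ hA _ ih =>
    have huw := hterms u w
    rw [mul_eq_zero, or_iff_right (hadj u w hA).ne', sq_eq_zero_iff, sub_eq_zero] at huw
    exact huw.trans ih

end WeightedLaplacian

theorem dotProduct_eq_zero_of_forall_eq {ι : Type*} [Fintype ι] {v z : ι → ℝ}
    (hv : ∀ i j, v i = v j) (hz : ∑ i, z i = 0) : v ⬝ᵥ z = 0 := by
  cases isEmpty_or_nonempty ι with
  | inl => simp [dotProduct]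
  | inr h =>
    obtain ⟨i₀⟩ := h
    simp only [dotProduct, hv _ i₀, ← mul_sum, hz, mul_zero]

theorem Matrix.IsHermitian.kronecker_diagonal {ι κ : Type*} [DecidableEq κ]
    {L : Matrix ι ι ℝ} (hL : L.IsHermitian) (d : κ → ℝ) : (L ⊗ₖ diagonal d).IsHermitian := by
  rw [IsHermitian, conjTranspose_kronecker, hL.eq, (isHermitian_diagonal d).eq]

section KroneckerDiagonal

variable {ι κ : Type*} [Fintype ι] [Fintype κ] [DecidableEq κ]

theorem kronecker_diagonal_mulVec_apply (L : Matrix ι ι ℝ) (d : κ → ℝ) (v : ι × κ → ℝ)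
    (i : ι) (k : κ) :
    ((L ⊗ₖ diagonal d) *ᵥ v) (i, k) = d k * (L *ᵥ fun j => v (j, k)) i := by
  simp only [mulVec, dotProduct, Fintype.sum_prod_type, kroneckerMap_apply, diagonal_apply,
    mul_sum]
  refine sum_congr rfl fun j _ => ?_
  rw [sum_eq_single k (fun k' _ hk' => by simp [Ne.symm hk']) (by simp), if_pos rfl]
  ring

theorem dotProduct_kronecker_diagonal_mulVec (L : Matrix ι ι ℝ) (d : κ → ℝ) (v : ι × κ → ℝ) :
    v ⬝ᵥ ((L ⊗ₖ diagonal d) *ᵥ v) =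
      ∑ k, d k * ((fun i => v (i, k)) ⬝ᵥ (L *ᵥ fun i => v (i, k))) := by
  simp only [dotProduct, Fintype.sum_prod_type, kronecker_diagonal_mulVec_apply, mul_sum]
  rw [sum_comm]
  exact sum_congr rfl fun k _ => sum_congr rfl fun i _ => by ring

theorem dotProduct_eq_zero_of_kronecker_diagonal_mulVec_eq_zero [DecidableEq ι]
    {a : ι → ι → ℝ} (hsym : ∀ i j, a i j = a j i) (hnonneg : ∀ i j, 0 ≤ a i j)
    {G : SimpleGraph ι} (hG : G.Connected) (hadj : ∀ i j, G.Adj i j → 0 < a i j)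
    {d : κ → ℝ} (hd : ∀ k, d k ≠ 0) {z : ι × κ → ℝ} (hz : ∀ k, ∑ i, z (i, k) = 0)
    {v : ι × κ → ℝ} (hv : (weightedLaplacian a ⊗ₖ diagonal d) *ᵥ v = 0) : v ⬝ᵥ z = 0 := by
  rw [dotProduct, Fintype.sum_prod_type, sum_comm]
  refine sum_eq_zero fun k _ => dotProduct_eq_zero_of_forall_eq ?_ (hz k)
  refine eq_of_weightedLaplacian_mulVec_eq_zero hsym hnonneg hG hadj ?_
  ext i
  have hik := congrFun hv (i, k)
  rwa [kronecker_diagonal_mulVec_apply, Pi.zero_apply, mul_eq_zero, or_iff_right (hd k)] at hik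

end KroneckerDiagonal

theorem sum_filter_val_lt_eq_sum_castLE {M : Type*} [AddCommMonoid M] {n l : ℕ} (hl : l ≤ n)
    (F : Fin n → M) :
    ∑ k ∈ univ.filter (fun k : Fin n => (k : ℕ) < l), F k = ∑ k : Fin l, F (Fin.castLE hl k) := by
  have hfilter : univ.filter (fun k : Fin n => (k : ℕ) < l) = univ.map (Fin.castLEEmb hl) := by
    ext k
    simp only [mem_filter, mem_univ, true_and, mem_map, Fin.castLEEmb_apply]
    exact ⟨fun hk => ⟨⟨k, hk⟩, rfl⟩, fun ⟨j, hj⟩ => hj ▸ j.isLt⟩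
  rw [hfilter, sum_map]
  rfl

theorem mul_sum_sq_le_sum_mul_dotProduct_weightedLaplacian {ι : Type*} [Fintype ι]
    [DecidableEq ι] {a : ι → ι → ℝ} (hsym : ∀ i j, a i j = a j i) (hnonneg : ∀ i j, 0 ≤ a i j)
    {G : SimpleGraph ι} (hG : G.Connected) (hadj : ∀ i j, G.Adj i j → 0 < a i j) {n l : ℕ}
    (hl : l ≤ n) {q : Fin n → ℝ} (hq : ∀ k : Fin n, (k : ℕ) < l → q k ≠ 0)
    (hq0 : ∀ k : Fin n, l ≤ (k : ℕ) → q k = 0) {lam : ℝ}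
    (hlam : ∀ μ, μ ≠ 0 → (∃ v, v ≠ 0 ∧
      (weightedLaplacian a ⊗ₖ diagonal fun k : Fin l => q (Fin.castLE hl k)) *ᵥ v = μ • v) →
        lam ≤ μ)
    {e : ι → Fin n → ℝ} (he : ∀ k, ∑ i, e i k = 0) :
    lam * ∑ i, ∑ k ∈ univ.filter (fun k : Fin n => (k : ℕ) < l), e i k ^ 2 ≤
      ∑ k, q k * ((fun i => e i k) ⬝ᵥ (weightedLaplacian a *ᵥ fun i => e i k)) := by
  set z : ι × Fin l → ℝ := fun ik => e ik.1 (Fin.castLE hl ik.2)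
  have hbound :=
    ((isHermitian_weightedLaplacian hsym).kronecker_diagonal _).mul_dotProduct_self_le hlam
      (z := z) fun v hv => dotProduct_eq_zero_of_kronecker_diagonal_mulVec_eq_zero hsym hnonneg
        hG hadj (fun k => hq _ k.isLt) (fun k => he (Fin.castLE hl k)) hv
  have hzz : z ⬝ᵥ z = ∑ i, ∑ k ∈ univ.filter (fun k : Fin n => (k : ℕ) < l), e i k ^ 2 := by
    simp only [dotProduct, Fintype.sum_prod_type, sum_filter_val_lt_eq_sum_castLE hl, sq, z]
  have hzBz :
      z ⬝ᵥ ((weightedLaplacian a ⊗ₖ diagonal fun k : Fin l => q (Fin.castLE hl k)) *ᵥ z) =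
        ∑ k, q k * ((fun i => e i k) ⬝ᵥ (weightedLaplacian a *ᵥ fun i => e i k)) := by
    rw [dotProduct_kronecker_diagonal_mulVec,
      ← sum_filter_of_ne (p := fun k : Fin n => (k : ℕ) < l) fun k _ hk => ?_,
      sum_filter_val_lt_eq_sum_castLE hl]
    by_contra hkl
    exact hk (by rw [hq0 k (not_lt.mp hkl), zero_mul])
  rwa [hzz, hzBz] at hbound

theorem sum_sum_mul_sub_expect_mul_coupled_eq {ι κ : Type*} [Fintype ι] [DecidableEq ι]
    [Fintype κ] (f : (κ → ℝ) → κ → ℝ) (g : ι → (κ → ℝ) → κ → ℝ) (a : ι → ι → ℝ) (c : ℝ)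
    (γ p : κ → ℝ) (x : ι → κ → ℝ) :
    ∑ i, ∑ k, p k * (x i k - (𝔼 j, x j) k) *
        (f (x i) k + g i (x i) k - c * ∑ j, a i j * (γ k * (x i k - x j k))) =
      ∑ i, ∑ k, p k * (x i k - (𝔼 j, x j) k) * (f (x i) k - f (𝔼 j, x j) k)
        + ∑ i, ∑ k, p k * (x i k - (𝔼 j, x j) k) * g i (x i) k
        - c * ∑ k, p k * γ k * ((fun i => x i k - (𝔼 j, x j) k) ⬝ᵥ
            (weightedLaplacian a *ᵥ fun i => x i k - (𝔼 j, x j) k)) := by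
  have hlap : ∑ k, p k * γ k * ((fun i => x i k - (𝔼 j, x j) k) ⬝ᵥ
      (weightedLaplacian a *ᵥ fun i => x i k - (𝔼 j, x j) k)) =
        ∑ i, ∑ k, p k * (x i k - (𝔼 j, x j) k) * ∑ j, a i j * (γ k * (x i k - x j k)) := by
    simp only [dotProduct, weightedLaplacian_mulVec_apply, sub_sub_sub_cancel_right, mul_sum]
    rw [sum_comm]
    exact sum_congr rfl fun i _ => sum_congr rfl fun k _ => sum_congr rfl fun j _ => by ring
  have hmean := sum_sum_mul_sub_expect_eq_zero x fun k => p k * f (𝔼 j, x j) k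
  rw [hlap, ← sub_zero (∑ i, ∑ k, _), ← hmean, mul_sum]
  simp only [← sum_sub_distrib, ← sum_add_distrib]
  refine sum_congr rfl fun i _ => ?_
  rw [mul_sum]
  simp only [← sum_sub_distrib]
  refine sum_congr rfl fun k _ => ?_
  ring
section Estimates

variable {ι κ : Type*} [Fintype ι] [Fintype κ]

theorem sum_mul_mul_le_mul_sqrt_mul_sqrt {p : κ → ℝ} {P : ℝ} (hP : ∀ k, |p k| ≤ P)
    (hP0 : 0 ≤ P) (e g : κ → ℝ) :
    ∑ k, p k * e k * g k ≤ P * √(∑ k, e k ^ 2) * √(∑ k, g k ^ 2) := by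
  calc ∑ k, p k * e k * g k ≤ √(∑ k, (p k * e k) ^ 2) * √(∑ k, g k ^ 2) :=
        Real.sum_mul_le_sqrt_mul_sqrt _ _ _
    _ ≤ √(P ^ 2 * ∑ k, e k ^ 2) * √(∑ k, g k ^ 2) := by
        gcongr
        rw [mul_sum]
        gcongr with k
        rw [mul_pow, ← sq_abs (p k)]
        gcongr
        exact hP k
    _ = P * √(∑ k, e k ^ 2) * √(∑ k, g k ^ 2) := by
        rw [Real.sqrt_mul (sq_nonneg _), Real.sqrt_sq hP0]

theorem sum_sqrt_le_sqrt_card_mul_sqrt_sum {u : ι → ℝ} (hu : ∀ i, 0 ≤ u i) :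
    ∑ i, √(u i) ≤ √(Fintype.card ι) * √(∑ i, u i) := by
  simpa using Real.sum_sqrt_mul_sqrt_le univ (fun _ => zero_le_one) hu

theorem sum_sum_mul_mul_le_sqrt_card_mul {p : κ → ℝ} {P : ℝ} (hP : ∀ k, |p k| ≤ P)
    (hP0 : 0 ≤ P) {M : ℝ} (hM : 0 ≤ M) {g : ι → κ → ℝ} (hg : ∀ i, √(∑ k, g i k ^ 2) ≤ M)
    (e : ι → κ → ℝ) :
    ∑ i, ∑ k, p k * e i k * g i k ≤
      √(Fintype.card ι) * P * M * √(∑ i, ∑ k, e i k ^ 2) := by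
  calc ∑ i, ∑ k, p k * e i k * g i k ≤ ∑ i, P * M * √(∑ k, e i k ^ 2) := by
        gcongr with i
        refine (sum_mul_mul_le_mul_sqrt_mul_sqrt hP hP0 _ _).trans ?_
        rw [mul_right_comm]
        gcongr
        exact hg i
    _ = P * M * ∑ i, √(∑ k, e i k ^ 2) := by rw [mul_sum]
    _ ≤ P * M * (√(Fintype.card ι) * √(∑ i, ∑ k, e i k ^ 2)) := by
        gcongr
        exact sum_sqrt_le_sqrt_card_mul_sqrt_sum fun i => sum_nonneg fun k _ => sq_nonneg _
    _ = √(Fintype.card ι) * P * M * √(∑ i, ∑ k, e i k ^ 2) := by ring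

theorem sum_sum_mul_sq_le_of_le (s : κ → Prop) [DecidablePred s] {w : κ → ℝ} {A B : ℝ}
    (hA : ∀ k, s k → w k ≤ A) (hB : ∀ k, ¬ s k → w k ≤ B) (e : ι → κ → ℝ) :
    ∑ i, ∑ k, w k * e i k ^ 2 ≤
      A * ∑ i, ∑ k ∈ univ.filter s, e i k ^ 2 + B * ∑ i, ∑ k ∈ univ.filter (¬ s ·), e i k ^ 2 := by
  rw [mul_sum, mul_sum, ← sum_add_distrib]
  gcongr with i
  rw [← sum_filter_add_sum_filter_not univ s, mul_sum, mul_sum]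
  gcongr with k hk k hk
  · exact hA k (mem_filter.mp hk).2
  · exact hB k (mem_filter.mp hk).2

theorem mul_sum_sum_add_mul_sum_sum_le_max_mul (s : κ → Prop) [DecidablePred s] (A B : ℝ)
    (e : ι → κ → ℝ) :
    A * ∑ i, ∑ k ∈ univ.filter s, e i k ^ 2 + B * ∑ i, ∑ k ∈ univ.filter (¬ s ·), e i k ^ 2 ≤
      max A B * ∑ i, ∑ k, e i k ^ 2 := by
  have hsplit : ∑ i, ∑ k, e i k ^ 2 =
      ∑ i, ∑ k ∈ univ.filter s, e i k ^ 2 + ∑ i, ∑ k ∈ univ.filter (¬ s ·), e i k ^ 2 := by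
    rw [← sum_add_distrib]
    simp only [sum_filter_add_sum_filter_not]
  have hX : 0 ≤ ∑ i, ∑ k ∈ univ.filter s, e i k ^ 2 := by positivity
  have hY : 0 ≤ ∑ i, ∑ k ∈ univ.filter (¬ s ·), e i k ^ 2 := by positivity
  rw [hsplit]
  nlinarith [le_max_left A B, le_max_right A B]

end Estimates

theorem stmt4_general (n N l : ℕ) (hl : l ≤ n)
    (f : (Fin n → ℝ) → (Fin n → ℝ)) (g : Fin N → (Fin n → ℝ) → (Fin n → ℝ))
    (p w : Fin n → ℝ) (hp : ∀ k, 0 < p k)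
    (hQUAD : ∀ x y : Fin n → ℝ,
      ∑ k, p k * (x k - y k) * (f x k - f y k) ≤ ∑ k, w k * (x k - y k) ^ 2)
    (γ : Fin n → ℝ) (hγpos : ∀ k : Fin n, (k : ℕ) < l → 0 < γ k)
    (hγ0 : ∀ k : Fin n, l ≤ (k : ℕ) → γ k = 0)
    (M : ℝ) (hM : 0 ≤ M)
    (hg : ∀ i x, Real.sqrt (∑ k, (g i x k) ^ 2) ≤ M)
    (a : Fin N → Fin N → ℝ) (hsym : ∀ i j, a i j = a j i) (hnonneg : ∀ i j, 0 ≤ a i j)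
    (G : SimpleGraph (Fin N)) (hadj : ∀ i j, G.Adj i j ↔ i ≠ j ∧ 0 < a i j)
    (hconn : G.Connected)
    (L : Matrix (Fin N) (Fin N) ℝ)
    (hL : ∀ i j, L i j = if i = j then ∑ k ∈ univ.erase i, a i k else -a i j)
    (lam₂ : ℝ)
    (hlam₂ : IsLeast {μ : ℝ | μ ≠ 0 ∧ ∃ z : Fin N × Fin l → ℝ, z ≠ 0 ∧
      (L ⊗ₖ Matrix.diagonal (fun k : Fin l => p (Fin.castLE hl k) * γ (Fin.castLE hl k)))
        *ᵥ z = μ • z} lam₂)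
    (wlmax : ℝ)
    (hwlmax : IsGreatest {r : ℝ | ∃ k : Fin n, (k : ℕ) < l ∧ w k = r} wlmax)
    (wnlmax : ℝ)
    (hwnlmax : IsGreatest {r : ℝ | ∃ k : Fin n, l ≤ (k : ℕ) ∧ w k = r} wnlmax)
    (Pnorm : ℝ) (hPnorm : IsGreatest (Set.range p) Pnorm)
    (c : ℝ) (hc : 0 < c)
    (m : ℝ) (hm : m = -max (wlmax - c * lam₂) wnlmax)
    (x : ℝ → Fin N → Fin n → ℝ)
    (hx : ∀ t : ℝ, ∀ i : Fin N, HasDerivAt (fun s => x s i)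
      (fun k => f (x t i) k + g i (x t i) k
        - c * ∑ j, a i j * (γ k * (x t i k - x t j k))) t)
    (E : ℝ → Fin N → Fin n → ℝ)
    (hE : ∀ s i k, E s i k = x s i k - (1 / N : ℝ) * ∑ j, x s j k) :
    ∀ t d : ℝ,
      HasDerivAt (fun s => (1 / 2 : ℝ) * ∑ i, ∑ k, p k * (E s i k) ^ 2) d t →
      d ≤ -m * (∑ i, ∑ k, (E t i k) ^ 2)
          + Real.sqrt N * Pnorm * M * Real.sqrt (∑ i, ∑ k, (E t i k) ^ 2) := by
  intro t d hd
  obtain rfl : L = weightedLaplacian a := Matrix.ext fun i j => hL i j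
  have hE_expect : ∀ s i k, E s i k = x s i k - (𝔼 j, x s j) k := fun s i k => by
    rw [hE, expect_apply, Fintype.expect_eq_sum_div_card, Fintype.card_fin]
    ring
  simp only [hE_expect] at hd ⊢
  rw [hd.unique (hasDerivAt_half_sum_mul_sq_sub_expect (hx t) p),
    sum_sum_mul_sub_expect_mul_coupled_eq]
  obtain ⟨⟨k₀, hk₀⟩, hPnorm_ge⟩ := hPnorm
  have hdrift := sum_le_sum fun i (_ : i ∈ univ) => hQUAD (x t i) (𝔼 j, x t j)
  have hpert := sum_sum_mul_mul_le_sqrt_card_mul (fun k => (abs_of_pos (hp k)).trans_le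
    (hPnorm_ge ⟨k, rfl⟩)) (hk₀ ▸ (hp k₀).le) hM (fun i => hg i (x t i))
    fun i k => x t i k - (𝔼 j, x t j) k
  have hcoup := mul_sum_sq_le_sum_mul_dotProduct_weightedLaplacian hsym hnonneg hconn
    (fun i j hij => ((hadj i j).mp hij).2) hl (q := fun k => p k * γ k)
    (fun k hk => (mul_pos (hp k) (hγpos k hk)).ne') (fun k hk => by rw [hγ0 k hk, mul_zero])
    (fun μ hμ hv => hlam₂.2 ⟨hμ, hv⟩) (sum_sub_expect_apply_eq_zero (x t))
  have hweights := sum_sum_mul_sq_le_of_le (fun k : Fin n => (k : ℕ) < l)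
    (fun k hk => hwlmax.2 ⟨k, hk, rfl⟩) (fun k hk => hwnlmax.2 ⟨k, not_lt.mp hk, rfl⟩)
    fun i k => x t i k - (𝔼 j, x t j) k
  have hmax := mul_sum_sum_add_mul_sum_sum_le_max_mul (fun k : Fin n => (k : ℕ) < l)
    (wlmax - c * lam₂) wnlmax fun i k => x t i k - (𝔼 j, x t j) k
  rw [Fintype.card_fin] at hpert
  rw [hm, neg_neg]
  linarith [mul_le_mul_of_nonneg_left hcoup hc.le]

/-- For `N` linearly coupled systems `ẋᵢ = f(xᵢ) + gᵢ(xᵢ) − c Σⱼ a_ij Γ(xᵢ−xⱼ)`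
with `f` QUAD(P,W), `P` positive diagonal, `Γ = diag γ` with `γ k > 0` for `k < l` and `0`
otherwise, `‖gᵢ‖ ≤ M`, `w k < 0` for `k ≥ l`, and a connected coupling graph with Laplacian
`L`, the Lyapunov function `V(e) = ½ eᵀ(I_N ⊗ P)e` of the error `eᵢ = xᵢ − x̄` satisfies
`V̇ ≤ −m(c,P,W)‖e‖₂² + √N ‖P‖₂ M ‖e‖₂`, where
`m(c,P,W) = −max{λ_max(W_l) − c λ₂(L ⊗ P_l Γ_l), λ_max(W_{n−l})}`. -/
theorem stmt4 (n N l : ℕ) (hN : 1 ≤ N) (hl : l ≤ n)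
    (f : (Fin n → ℝ) → (Fin n → ℝ)) (g : Fin N → (Fin n → ℝ) → (Fin n → ℝ))
    (p w : Fin n → ℝ) (hp : ∀ k, 0 < p k)
    (hQUAD : ∀ x y : Fin n → ℝ,
      ∑ k, p k * (x k - y k) * (f x k - f y k) ≤ ∑ k, w k * (x k - y k) ^ 2)
    (γ : Fin n → ℝ) (hγpos : ∀ k : Fin n, (k : ℕ) < l → 0 < γ k)
    (hγ0 : ∀ k : Fin n, l ≤ (k : ℕ) → γ k = 0)
    (hwneg : ∀ k : Fin n, l ≤ (k : ℕ) → w k < 0)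
    (M : ℝ) (hM : 0 ≤ M)
    (hg : ∀ i x, Real.sqrt (∑ k, (g i x k) ^ 2) ≤ M)
    (a : Fin N → Fin N → ℝ) (hsym : ∀ i j, a i j = a j i) (hnonneg : ∀ i j, 0 ≤ a i j)
    (G : SimpleGraph (Fin N)) (hadj : ∀ i j, G.Adj i j ↔ i ≠ j ∧ 0 < a i j)
    (hconn : G.Connected)
    (L : Matrix (Fin N) (Fin N) ℝ)
    (hL : ∀ i j, L i j = if i = j then ∑ k ∈ univ.erase i, a i k else -a i j)
    (lam₂ : ℝ)
    (hlam₂ : IsLeast {μ : ℝ | μ ≠ 0 ∧ ∃ z : Fin N × Fin l → ℝ, z ≠ 0 ∧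
      (L ⊗ₖ Matrix.diagonal (fun k : Fin l => p (Fin.castLE hl k) * γ (Fin.castLE hl k)))
        *ᵥ z = μ • z} lam₂)
    (wlmax : ℝ)
    (hwlmax : IsGreatest {r : ℝ | ∃ k : Fin n, (k : ℕ) < l ∧ w k = r} wlmax)
    (wnlmax : ℝ)
    (hwnlmax : IsGreatest {r : ℝ | ∃ k : Fin n, l ≤ (k : ℕ) ∧ w k = r} wnlmax)
    (Pnorm : ℝ) (hPnorm : IsGreatest (Set.range p) Pnorm)
    (c : ℝ) (hc : 0 < c)
    (m : ℝ) (hm : m = -max (wlmax - c * lam₂) wnlmax)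
    (x : ℝ → Fin N → Fin n → ℝ)
    (hx : ∀ t : ℝ, ∀ i : Fin N, HasDerivAt (fun s => x s i)
      (fun k => f (x t i) k + g i (x t i) k
        - c * ∑ j, a i j * (γ k * (x t i k - x t j k))) t)
    (E : ℝ → Fin N → Fin n → ℝ)
    (hE : ∀ s i k, E s i k = x s i k - (1 / N : ℝ) * ∑ j, x s j k) :
    ∀ t d : ℝ,
      HasDerivAt (fun s => (1 / 2 : ℝ) * ∑ i, ∑ k, p k * (E s i k) ^ 2) d t →
      d ≤ -m * (∑ i, ∑ k, (E t i k) ^ 2)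
          + Real.sqrt N * Pnorm * M * Real.sqrt (∑ i, ∑ k, (E t i k) ^ 2) :=
  stmt4_general n N l hl f g p w hp hQUAD γ hγpos hγ0 M hM hg a hsym hnonneg G hadj hconn L hL lam₂
    hlam₂ wlmax hwlmax wnlmax hwnlmax Pnorm hPnorm c hc m hm x hx E hE
end

section
/- The Chua vector field h(x) = (10(x₂ − x₁ − φ(x₁)), x₁ − x₂ + x₃, −17.3 x₂) with φ(s) = −0.73 s − 0.305(|s+1| − |s−1|) is QUAD(P,W) for P = diag(p₁, 17.3 p₃, p₃) with p₁, p₃ > 0 and any diagonal W = diag(w₁, w₂, w₃) with w₃ ≥ 0, w₁ ≥ 3.4p₁ + ρ(10p₁ + 17.3p₃)/2 and w₂ ≥ −17.3p₃ + (10p₁ + 17.3p₃)/(2ρ) for some ρ > 0; i.e., (x−y)ᵀP(h(x)−h(y)) ≤ (x−y)ᵀW(x−y) for all x,y ∈ ℝ³. -/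
open Finset

lemma key_lip (a b : ℝ) :
    (a - b) * ((|a + 1| - |a - 1|) - (|b + 1| - |b - 1|)) ≤ 2 * (a - b) ^ 2 := by
  have h1 : |(|a + 1| - |b + 1|)| ≤ |a - b| := by
    have := abs_abs_sub_abs_le_abs_sub (a + 1) (b + 1)
    simpa using this
  have h2 : |(|a - 1| - |b - 1|)| ≤ |a - b| := by
    have := abs_abs_sub_abs_le_abs_sub (a - 1) (b - 1)
    have e : a - 1 - (b - 1) = a - b := by ring
    rwa [e] at this
  have h3 := abs_le.mp h1
  have h4 := abs_le.mp h2
  have h5 := le_abs_self (a - b)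
  have h6 := neg_abs_le (a - b)
  nlinarith [sq_nonneg (a - b), sq_abs (a - b)]

/-- The Chua vector field
`h(x) = (10(x₂ − x₁ − φ(x₁)), x₁ − x₂ + x₃, −17.3 x₂)` with
`φ(s) = −0.73 s − 0.305(|s+1| − |s−1|)` is QUAD(P,W) for `P = diag(p₁, 17.3p₃, p₃)`,
`p₁, p₃ > 0`, and any diagonal `W = diag(w₁,w₂,w₃)` with `w₃ ≥ 0`,
`w₁ ≥ 3.4p₁ + ρ(10p₁ + 17.3p₃)/2` and `w₂ ≥ −17.3p₃ + (10p₁ + 17.3p₃)/(2ρ)` for some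
`ρ > 0`. -/
theorem stmt10 (φ : ℝ → ℝ)
    (hφ : ∀ s : ℝ, φ s = (-0.73) * s - 0.305 * (|s + 1| - |s - 1|))
    (h : (Fin 3 → ℝ) → (Fin 3 → ℝ))
    (hh : ∀ x : Fin 3 → ℝ,
      h x = ![10 * (x 1 - x 0 - φ (x 0)), x 0 - x 1 + x 2, -17.3 * x 1])
    (p₁ p₃ ρ : ℝ) (hp₁ : 0 < p₁) (hp₃ : 0 < p₃) (hρ : 0 < ρ)
    (w₁ w₂ w₃ : ℝ) (hw₃ : 0 ≤ w₃)
    (hw₁ : 3.4 * p₁ + ρ * (10 * p₁ + 17.3 * p₃) / 2 ≤ w₁)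
    (hw₂ : -17.3 * p₃ + (10 * p₁ + 17.3 * p₃) / (2 * ρ) ≤ w₂)
    (P W : Fin 3 → ℝ) (hP : P = ![p₁, 17.3 * p₃, p₃]) (hW : W = ![w₁, w₂, w₃]) :
    ∀ x y : Fin 3 → ℝ,
      ∑ k, P k * (x k - y k) * (h x k - h y k) ≤ ∑ k, W k * (x k - y k) ^ 2 := by
  intro x y
  subst hP hW
  rw [Fin.sum_univ_three, Fin.sum_univ_three, hh x, hh y, hφ (x 0), hφ (y 0)]
  simp only [Matrix.cons_val_zero, Matrix.cons_val_one, Matrix.head_cons,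
    Matrix.cons_val_two, Matrix.tail_cons]
  have key := key_lip (x 0) (y 0)
  have hc : 0 < 10 * p₁ + 17.3 * p₃ := by nlinarith
  -- bound w₂ term: (10p₁+17.3p₃)/(2ρ) : clear denominator
  have hw₂' : (-17.3 * p₃) * (2 * ρ) + (10 * p₁ + 17.3 * p₃) ≤ w₂ * (2 * ρ) := by
    nlinarith [mul_le_mul_of_nonneg_right hw₂ (by positivity : (0:ℝ) ≤ 2 * ρ),
      (div_mul_cancel₀ (10 * p₁ + 17.3 * p₃) (by positivity : (2 * ρ : ℝ) ≠ 0))]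
  have hsq : 0 ≤ (10 * p₁ + 17.3 * p₃) * (ρ * (x 0 - y 0) - (x 1 - y 1)) ^ 2 := by positivity
  have hw3 : 0 ≤ w₃ * (x 2 - y 2) ^ 2 := by positivity
  nlinarith [mul_le_mul_of_nonneg_left key (le_of_lt (by linarith : (0:ℝ) < 3.05 * p₁)),
    mul_le_mul_of_nonneg_right hw₁ (sq_nonneg (x 0 - y 0)),
    mul_le_mul_of_nonneg_right hw₂' (sq_nonneg (x 1 - y 1)),
    mul_pos hρ hρ, sq_nonneg (x 1 - y 1), sq_nonneg (x 0 - y 0), hρ.le]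
end

section
/- Consider N heterogeneous Kuramoto oscillators θ̇ᵢ = ωᵢ + c Σⱼ a_ij sin(θⱼ − θᵢ) on a connected graph, with error eᵢ = θᵢ − (1/N)Σⱼθⱼ. Suppose |eᵢ(t) − eⱼ(t)| ≤ e_max < π for all i,j at time t. Then, since sin(z)·z ≥ (sin(e_max)/e_max) z² for |z| ≤ e_max, the Lyapunov function V = ½Σᵢeᵢ² satisfies V̇ ≤ −c·υ·λ₂(L)·Σᵢeᵢ² + ‖e‖₂·‖ω̄‖₂, where υ = sin(e_max)/e_max > 0 and ω̄ᵢ = ωᵢ − (1/N)Σⱼωⱼ. -/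
/-!
Differentiating `V` gives `V̇ = Σᵢ eᵢ ω̄ᵢ + c Σᵢ eᵢ Σⱼ aᵢⱼ sin(eⱼ - eᵢ)`, since `Σᵢ eᵢ = 0` kills
every term that is constant in `i`. Symmetrising the double sum in `(i, j)` turns the coupling
term into `-½ Σᵢⱼ aᵢⱼ (eⱼ - eᵢ) sin(eⱼ - eᵢ)`, and concavity of `sin` on `[0, π]` gives
`z sin z ≥ υ z²` for `|z| ≤ e_max`, so the coupling term is at most `-c υ eᵀ L e`. On a connected
graph the kernel of `L` consists of the constant vectors, to which `e` is orthogonal; expanding `e`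
in an orthonormal eigenbasis of `L` then gives `eᵀ L e ≥ λ₂ ‖e‖²`. Cauchy–Schwarz bounds the
remaining term `Σᵢ eᵢ ω̄ᵢ`.
-/

open Matrix Finset

theorem Matrix.IsHermitian.mul_sum_sq_le_dotProduct_mulVec {ι : Type*} [Fintype ι]
    [DecidableEq ι] {A : Matrix ι ι ℝ} (hA : A.IsHermitian) {lam : ℝ}
    (hlam : ∀ μ ≠ 0, ∀ z ≠ 0, A *ᵥ z = μ • z → lam ≤ μ)
    {x : ι → ℝ} (hx : ∀ z, A *ᵥ z = 0 → x ⬝ᵥ z = 0) :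
    lam * ∑ i, x i ^ 2 ≤ x ⬝ᵥ (A *ᵥ x) := by
  set b := hA.eigenvectorBasis
  set μ := hA.eigenvalues
  have hinner : ∀ y z : EuclideanSpace ℝ ι, inner ℝ y z = (y : ι → ℝ) ⬝ᵥ z := fun y z => by
    simp [EuclideanSpace.inner_eq_star_dotProduct, dotProduct_comm]
  have hnorm : ∑ i, x i ^ 2 = ∑ k, (x ⬝ᵥ b k) ^ 2 := by
    simpa [hinner, EuclideanSpace.real_norm_sq_eq] using
      (b.sum_sq_inner_left (WithLp.toLp 2 x)).symm
  have hquad : x ⬝ᵥ (A *ᵥ x) = ∑ k, μ k * (x ⬝ᵥ b k) ^ 2 := by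
    have hsymm : ∀ k, (b k : ι → ℝ) ⬝ᵥ (A *ᵥ x) = μ k * (x ⬝ᵥ b k) := by
      intro k
      rw [← (isHermitian_iff_isSymm.mp hA).eq, dotProduct_transpose_mulVec,
        hA.mulVec_eigenvectorBasis, dotProduct_smul, smul_eq_mul]
    have hexpand := b.sum_inner_mul_inner (WithLp.toLp 2 x) (WithLp.toLp 2 (A *ᵥ x))
    simp only [hinner, hsymm] at hexpand
    rw [← hexpand]
    exact sum_congr rfl fun k _ => by ring
  rw [hnorm, hquad, mul_sum]
  refine sum_le_sum fun k _ => ?_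
  have hbk : A *ᵥ b k = μ k • b k := hA.mulVec_eigenvectorBasis k
  by_cases hμ : μ k = 0
  · rw [hx _ (by rw [hbk, hμ, zero_smul])]; simp
  · have hbk0 : (b k : ι → ℝ) ≠ 0 := fun h => b.orthonormal.ne_zero k (by ext i; exact congrFun h i)
    exact mul_le_mul_of_nonneg_right (hlam _ hμ _ hbk0 hbk) (sq_nonneg _)

section Sums

variable {ι : Type*} [Fintype ι] {a : ι → ι → ℝ}

theorem sum_mul_sum_sub_odd (hsym : ∀ i j, a i j = a j i) {g : ℝ → ℝ}
    (hg : ∀ z, g (-z) = -g z) (x : ι → ℝ) :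
    ∑ i, x i * ∑ j, a i j * g (x j - x i)
      = -(1 / 2) * ∑ i, ∑ j, a i j * ((x j - x i) * g (x j - x i)) := by
  set S := ∑ i, ∑ j, a i j * (x i * g (x j - x i))
  have hS : ∑ i, x i * ∑ j, a i j * g (x j - x i) = S :=
    sum_congr rfl fun i _ => by rw [mul_sum]; exact sum_congr rfl fun j _ => by ring
  have hswap : S = ∑ i, ∑ j, -(a i j * (x j * g (x j - x i))) := by
    rw [sum_comm]
    refine sum_congr rfl fun i _ => sum_congr rfl fun j _ => ?_
    rw [hsym, ← neg_sub, hg]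
    ring
  have h2 : S + S = -∑ i, ∑ j, a i j * ((x j - x i) * g (x j - x i)) := by
    nth_rewrite 2 [hswap]
    simp only [S, ← sum_neg_distrib, ← sum_add_distrib]
    exact sum_congr rfl fun i _ => sum_congr rfl fun j _ => by ring
  linarith

theorem sum_sub_average_eq_zero (x : ι → ℝ) :
    ∑ i, (x i - (1 / Fintype.card ι : ℝ) * ∑ j, x j) = 0 := by
  rcases isEmpty_or_nonempty ι with hι | hι
  · simp
  rw [sum_sub_distrib, sum_const, card_univ, nsmul_eq_mul, ← mul_assoc, mul_one_div_cancel
    (Nat.cast_ne_zero.2 Fintype.card_ne_zero), one_mul, sub_self]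

theorem sum_mul_sub_const {x : ι → ℝ} (hx : ∑ i, x i = 0) (y : ι → ℝ) (m : ℝ) :
    ∑ i, x i * (y i - m) = ∑ i, x i * y i := by
  simp only [mul_sub, sum_sub_distrib, ← sum_mul, hx, zero_mul, sub_zero]

theorem HasDerivAt.half_sum_sq {x : ℝ → ι → ℝ} {x' : ι → ℝ} {t : ℝ}
    (hx : ∀ i, HasDerivAt (fun s => x s i) (x' i) t) :
    HasDerivAt (fun s => 1 / 2 * ∑ i, x s i ^ 2) (∑ i, x t i * x' i) t := by
  refine ((HasDerivAt.fun_sum fun i _ => (hx i).pow 2).const_mul (1 / 2 : ℝ)).congr_deriv ?_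
  rw [mul_sum]
  exact sum_congr rfl fun i _ => by push_cast; ring

end Sums

theorem sin_div_mul_le_sin {emax z : ℝ} (h0 : 0 < emax) (hπ : emax ≤ Real.pi) (hz0 : 0 ≤ z)
    (hz : z ≤ emax) : Real.sin emax / emax * z ≤ Real.sin z := by
  have hconc := strictConcaveOn_sin_Icc.concaveOn.2
    (show (0 : ℝ) ∈ Set.Icc 0 Real.pi from ⟨le_rfl, Real.pi_pos.le⟩)
    (show emax ∈ Set.Icc 0 Real.pi from ⟨h0.le, hπ⟩) (sub_nonneg.2 ((div_le_one h0).2 hz))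
    (div_nonneg hz0 h0.le) (sub_add_cancel 1 _)
  simp only [smul_eq_mul, mul_zero, zero_add, Real.sin_zero, div_mul_cancel₀ z h0.ne'] at hconc
  calc Real.sin emax / emax * z = z / emax * Real.sin emax := by ring
    _ ≤ Real.sin z := hconc

theorem sin_div_mul_sq_le_mul_sin {emax z : ℝ} (h0 : 0 < emax) (hπ : emax ≤ Real.pi)
    (hz : |z| ≤ emax) : Real.sin emax / emax * z ^ 2 ≤ z * Real.sin z := by
  rcases le_total 0 z with hz0 | hz0
  · have h := sin_div_mul_le_sin h0 hπ hz0 (abs_le.1 hz).2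
    nlinarith
  · have h := sin_div_mul_le_sin h0 hπ (neg_nonneg.2 hz0) (neg_le.1 (abs_le.1 hz).1)
    rw [Real.sin_neg] at h
    nlinarith

def laplacian {ι : Type*} [Fintype ι] [DecidableEq ι] (a : ι → ι → ℝ) : Matrix ι ι ℝ :=
  fun i j => if i = j then ∑ k ∈ univ.erase i, a i k else -a i j

section Laplacian

variable {ι : Type*} [Fintype ι] [DecidableEq ι] {a : ι → ι → ℝ}

theorem laplacian_mulVec_apply (a : ι → ι → ℝ) (v : ι → ℝ) (i : ι) :
    (laplacian a *ᵥ v) i = ∑ j, a i j * (v i - v j) := by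
  rw [mulVec, dotProduct, ← add_sum_erase _ _ (mem_univ i),
    ← add_sum_erase _ _ (mem_univ i), sub_self, mul_zero, zero_add,
    show laplacian a i i = ∑ k ∈ univ.erase i, a i k from if_pos rfl, sum_mul,
    ← sum_add_distrib]
  refine sum_congr rfl fun j hj => ?_
  rw [show laplacian a i j = -a i j from if_neg (ne_of_mem_erase hj).symm]
  ring

theorem dotProduct_laplacian_mulVec (hsym : ∀ i j, a i j = a j i) (v : ι → ℝ) :
    v ⬝ᵥ (laplacian a *ᵥ v) = (1 / 2) * ∑ i, ∑ j, a i j * (v j - v i) ^ 2 := by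
  have h := sum_mul_sum_sub_odd hsym (g := id) (fun _ => rfl) v
  simp only [id, ← sq] at h
  have hneg : v ⬝ᵥ (laplacian a *ᵥ v) = -∑ i, v i * ∑ j, a i j * (v j - v i) := by
    simp only [dotProduct, laplacian_mulVec_apply, ← sum_neg_distrib, mul_sum]
    exact sum_congr rfl fun i _ => sum_congr rfl fun j _ => by ring
  rw [hneg, h]
  ring

theorem laplacian_isHermitian (hsym : ∀ i j, a i j = a j i) : (laplacian a).IsHermitian := by
  refine isHermitian_iff_isSymm.mpr (IsSymm.ext fun i j => ?_)
  by_cases hij : i = j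
  · rw [hij]
  · simp only [laplacian, if_neg hij, if_neg (Ne.symm hij), hsym]

theorem SimpleGraph.Preconnected.eq_of_laplacian_mulVec_eq_zero {G : SimpleGraph ι}
    (hG : G.Preconnected) (hadj : ∀ i j, G.Adj i j → 0 < a i j) (hnonneg : ∀ i j, 0 ≤ a i j)
    (hsym : ∀ i j, a i j = a j i) {v : ι → ℝ} (hv : laplacian a *ᵥ v = 0) (i j : ι) :
    v i = v j := by
  have hterm : ∀ i j, a i j * (v j - v i) ^ 2 = 0 := by
    have h := dotProduct_laplacian_mulVec hsym v
    rw [hv, dotProduct_zero] at h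
    have hnn : ∀ i j, 0 ≤ a i j * (v j - v i) ^ 2 := fun i j =>
      mul_nonneg (hnonneg i j) (sq_nonneg _)
    have hsum : ∑ i, ∑ j, a i j * (v j - v i) ^ 2 = 0 := by linarith
    intro i j
    rw [sum_eq_zero_iff_of_nonneg fun i _ => sum_nonneg fun j _ => hnn i j] at hsum
    exact (sum_eq_zero_iff_of_nonneg fun j _ => hnn i j).mp (hsum i (mem_univ _)) j (mem_univ _)
  have hstep : ∀ i j, G.Adj i j → v i = v j := fun i j h => by
    have hij := hterm i j
    rw [mul_eq_zero, sq_eq_zero_iff, sub_eq_zero] at hij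
    exact hij.resolve_left (hadj i j h).ne' |>.symm
  obtain ⟨w⟩ := hG i j
  induction w with
  | nil => rfl
  | cons h _ ih => exact (hstep _ _ h).trans ih

theorem mul_sum_sq_le_dotProduct_laplacian_mulVec {G : SimpleGraph ι} (hG : G.Preconnected)
    (hadj : ∀ i j, G.Adj i j → 0 < a i j) (hnonneg : ∀ i j, 0 ≤ a i j)
    (hsym : ∀ i j, a i j = a j i) {lam : ℝ}
    (hlam : ∀ μ ≠ 0, ∀ z ≠ 0, laplacian a *ᵥ z = μ • z → lam ≤ μ)
    {x : ι → ℝ} (hx : ∑ i, x i = 0) :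
    lam * ∑ i, x i ^ 2 ≤ x ⬝ᵥ (laplacian a *ᵥ x) := by
  refine (laplacian_isHermitian hsym).mul_sum_sq_le_dotProduct_mulVec hlam fun z hz => ?_
  rcases isEmpty_or_nonempty ι with hι | ⟨⟨i₀⟩⟩
  · simp [dotProduct]
  calc x ⬝ᵥ z = ∑ i, x i * z i₀ :=
        sum_congr rfl fun i _ => by rw [hG.eq_of_laplacian_mulVec_eq_zero hadj hnonneg hsym hz i i₀]
    _ = 0 := by rw [← sum_mul, hx, zero_mul]

theorem sum_mul_sum_sin_sub_le (hsym : ∀ i j, a i j = a j i) (hnonneg : ∀ i j, 0 ≤ a i j)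
    {emax : ℝ} (h0 : 0 < emax) (hπ : emax ≤ Real.pi) {x : ι → ℝ}
    (hx : ∀ i j, |x i - x j| ≤ emax) :
    ∑ i, x i * ∑ j, a i j * Real.sin (x j - x i)
      ≤ -(Real.sin emax / emax) * (x ⬝ᵥ (laplacian a *ᵥ x)) := by
  rw [sum_mul_sum_sub_odd hsym Real.sin_neg, dotProduct_laplacian_mulVec hsym]
  have h : Real.sin emax / emax * ∑ i, ∑ j, a i j * (x j - x i) ^ 2
      ≤ ∑ i, ∑ j, a i j * ((x j - x i) * Real.sin (x j - x i)) := by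
    rw [mul_sum]
    refine sum_le_sum fun i _ => ?_
    rw [mul_sum]
    refine sum_le_sum fun j _ => ?_
    rw [mul_left_comm]
    exact mul_le_mul_of_nonneg_left (sin_div_mul_sq_le_mul_sin h0 hπ (hx j i)) (hnonneg i j)
  linarith

end Laplacian

theorem stmt17_general (N : ℕ)
    (a : Fin N → Fin N → ℝ) (hsym : ∀ i j, a i j = a j i) (hnonneg : ∀ i j, 0 ≤ a i j)
    (G : SimpleGraph (Fin N)) (hadj : ∀ i j, G.Adj i j ↔ i ≠ j ∧ 0 < a i j)
    (hconn : G.Connected)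
    (L : Matrix (Fin N) (Fin N) ℝ)
    (hL : ∀ i j, L i j = if i = j then ∑ k ∈ univ.erase i, a i k else -a i j)
    (lam₂ : ℝ)
    (hlam₂ : IsLeast {μ : ℝ | μ ≠ 0 ∧ ∃ z : Fin N → ℝ, z ≠ 0 ∧ L *ᵥ z = μ • z} lam₂)
    (c : ℝ) (hc : 0 < c) (ω : Fin N → ℝ)
    (θ : ℝ → Fin N → ℝ)
    (hθ : ∀ t : ℝ, ∀ i : Fin N, HasDerivAt (fun s => θ s i)
      (ω i + c * ∑ j, a i j * Real.sin (θ t j - θ t i)) t)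
    (e : ℝ → Fin N → ℝ) (he : ∀ s i, e s i = θ s i - (1 / N : ℝ) * ∑ j, θ s j)
    (ωbar : Fin N → ℝ) (hωbar : ∀ i, ωbar i = ω i - (1 / N : ℝ) * ∑ j, ω j)
    (emax : ℝ) (hemax0 : 0 < emax) (hemaxπ : emax < Real.pi)
    (t : ℝ) (hclose : ∀ i j, |e t i - e t j| ≤ emax) :
    ∀ d : ℝ, HasDerivAt (fun s => (1 / 2 : ℝ) * ∑ i, (e s i) ^ 2) d t →
      d ≤ -(c * (Real.sin emax / emax) * lam₂) * ∑ i, (e t i) ^ 2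
          + Real.sqrt (∑ i, (e t i) ^ 2) * Real.sqrt (∑ i, (ωbar i) ^ 2) := by
  intro d hd
  obtain rfl : L = laplacian a := Matrix.ext hL
  set θ' : Fin N → ℝ := fun i => ω i + c * ∑ j, a i j * Real.sin (θ t j - θ t i)
  have hmean : ∑ i, e t i = 0 := by simpa [he] using sum_sub_average_eq_zero (θ t)
  have hde : ∀ i, HasDerivAt (fun s => e s i) (θ' i - (1 / N : ℝ) * ∑ j, θ' j) t := fun i => by
    simp only [he]
    exact (hθ t i).sub ((HasDerivAt.fun_sum fun j _ => hθ t j).const_mul _)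
  have hdiff : ∀ i j, θ t j - θ t i = e t j - e t i := fun i j => by simp only [he]; ring
  have hd_eq : d = ∑ i, e t i * ωbar i
      + c * ∑ i, e t i * ∑ j, a i j * Real.sin (e t j - e t i) := by
    simp only [hd.unique (HasDerivAt.half_sum_sq hde), sum_mul_sub_const hmean, hωbar, θ',
      hdiff, mul_add, sum_add_distrib, mul_sum]
    exact congrArg _ (sum_congr rfl fun i _ => sum_congr rfl fun j _ => by ring)
  have hcoupling := sum_mul_sum_sin_sub_le hsym hnonneg hemax0 hemaxπ.le hclose
  have hrayleigh := mul_sum_sq_le_dotProduct_laplacian_mulVec hconn.preconnected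
    (fun i j h => ((hadj i j).1 h).2) hnonneg hsym
    (fun μ hμ z hz hLz => hlam₂.2 ⟨hμ, z, hz, hLz⟩) hmean
  have hCS := Real.sum_mul_le_sqrt_mul_sqrt univ (e t) ωbar
  have hυ : 0 ≤ c * (Real.sin emax / emax) :=
    mul_nonneg hc.le (div_pos (Real.sin_pos_of_pos_of_lt_pi hemax0 hemaxπ) hemax0).le
  rw [hd_eq]
  linarith [mul_le_mul_of_nonneg_left hrayleigh hυ, mul_le_mul_of_nonneg_left hcoupling hc.le]

/-- For `N` heterogeneous Kuramoto oscillators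
`θ̇ᵢ = ωᵢ + c Σⱼ a_ij sin(θⱼ − θᵢ)` on a connected graph with Laplacian `L` and algebraic
connectivity `λ₂(L)`, with errors `eᵢ = θᵢ − (1/N)Σⱼθⱼ` satisfying
`|eᵢ(t) − eⱼ(t)| ≤ e_max < π`, the Lyapunov function `V = ½Σᵢeᵢ²` satisfies
`V̇ ≤ −c υ λ₂(L) Σᵢeᵢ² + ‖e‖₂‖ω̄‖₂` with `υ = sin(e_max)/e_max`. -/
theorem stmt17 (N : ℕ) (hN : 1 ≤ N)
    (a : Fin N → Fin N → ℝ) (hsym : ∀ i j, a i j = a j i) (hnonneg : ∀ i j, 0 ≤ a i j)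
    (G : SimpleGraph (Fin N)) (hadj : ∀ i j, G.Adj i j ↔ i ≠ j ∧ 0 < a i j)
    (hconn : G.Connected)
    (L : Matrix (Fin N) (Fin N) ℝ)
    (hL : ∀ i j, L i j = if i = j then ∑ k ∈ univ.erase i, a i k else -a i j)
    (lam₂ : ℝ)
    (hlam₂ : IsLeast {μ : ℝ | μ ≠ 0 ∧ ∃ z : Fin N → ℝ, z ≠ 0 ∧ L *ᵥ z = μ • z} lam₂)
    (c : ℝ) (hc : 0 < c) (ω : Fin N → ℝ)
    (θ : ℝ → Fin N → ℝ)
    (hθ : ∀ t : ℝ, ∀ i : Fin N, HasDerivAt (fun s => θ s i)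
      (ω i + c * ∑ j, a i j * Real.sin (θ t j - θ t i)) t)
    (e : ℝ → Fin N → ℝ) (he : ∀ s i, e s i = θ s i - (1 / N : ℝ) * ∑ j, θ s j)
    (ωbar : Fin N → ℝ) (hωbar : ∀ i, ωbar i = ω i - (1 / N : ℝ) * ∑ j, ω j)
    (emax : ℝ) (hemax0 : 0 < emax) (hemaxπ : emax < Real.pi)
    (t : ℝ) (hclose : ∀ i j, |e t i - e t j| ≤ emax) :
    ∀ d : ℝ, HasDerivAt (fun s => (1 / 2 : ℝ) * ∑ i, (e s i) ^ 2) d t →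
      d ≤ -(c * (Real.sin emax / emax) * lam₂) * ∑ i, (e t i) ^ 2
          + Real.sqrt (∑ i, (e t i) ^ 2) * Real.sqrt (∑ i, (ωbar i) ^ 2) :=
  stmt17_general N a hsym hnonneg G hadj hconn L hL lam₂ hlam₂ c hc ω θ hθ e he ωbar hωbar emax
    hemax0 hemaxπ t hclose
end
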